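/- Let A be a finite alphabet, (v_i) a sequence of finite words with ‖v_i‖ → ∞ satisfying ‖v_{N+1}‖/(‖v_1‖+...+‖v_N‖) → 0 and N/(‖v_1‖+...+‖v_N‖) → 0, and suppose the concatenation v = v_1 v_2 ... is μ-normal for a shift-invariant probability measure μ. Then for every finite word d, (1/n) Σ_{i=1}^{N(n)} N_d(v_i) → μ(d) as n → ∞, where N(n) is maximal with ‖v_1‖+...+‖v_{N(n)}‖ ≤ n and N_d(v_i) counts occurrences of d inside v_i alone. -/

import Mathlib

open Filter MeasureTheory

/-- Number of occurrences of the pattern `d` starting within the first `n`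
letters of the infinite word `ω`. -/
def occCount {A : Type*} [DecidableEq A] (d : List A) (ω : ℕ → A) (n : ℕ) : ℕ :=
  ((Finset.range n).filter
    (fun i => List.ofFn (fun j : Fin d.length => ω (i + (j : ℕ))) = d)).card

/-- The cylinder set of infinite words starting with the finite word `d`. -/
def cylinder {A : Type*} (d : List A) : Set (ℕ → A) :=
  {ω | List.ofFn (fun j : Fin d.length => ω (j : ℕ)) = d}

/-- An infinite word is μ-normal if every finite pattern occurs with asymptotic
frequency the μ-measure of its cylinder. -/
def IsMuNormal {A : Type*} [DecidableEq A] [MeasurableSpace A]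
    (μ : Measure (ℕ → A)) (ω : ℕ → A) : Prop :=
  ∀ d : List A,
    Tendsto (fun n => (occCount d ω n : ℝ) / n) atTop
      (nhds (μ (cylinder d)).toReal)

/-- `ω` is the infinite concatenation of the finite words `v 0, v 1, v 2, ...`. -/
def IsConcat {A : Type*} (v : ℕ → List A) (ω : ℕ → A) : Prop :=
  ∀ N j, j < ∑ i ∈ Finset.range N, (v i).length →
    ((List.range N).map v).flatten[j]? = some (ω j)

/-- Number of occurrences of `d` as a factor of the finite word `w`. -/
def countFactor {A : Type*} [DecidableEq A] (d w : List A) : ℕ :=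
  ((Finset.range (w.length + 1)).filter
    (fun j => j + d.length ≤ w.length ∧ (w.drop j).take d.length = d)).card

/-!
Cutting `V` at the block boundaries, an occurrence of `d` starting before position `n` either
lies inside one of the blocks `v 0, …, v (N - 1)` (where `N = Nf n`), or crosses the right end
of one of them (at most `d.length` per block), or starts in the block `v N`, which is only
partially read; conversely each in-block occurrence is one in `V`, except that the empty pattern
is counted once more per block. The two counts thus differ by at most `(d.length + 1) N + ‖v N‖`,
which is `o(n)` by the two ratio hypotheses since `‖v 0‖ + … + ‖v (N - 1)‖ ≤ n`.
-/

open Finset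

theorem ofFn_eq_take_drop {A : Type*} {w : List A} {ω : ℕ → A}
    (hω : ∀ j (hj : j < w.length), ω j = w[j]) {j k : ℕ} (hjk : j + k ≤ w.length) :
    List.ofFn (fun t : Fin k => ω (j + t)) = (w.drop j).take k := by
  apply List.ext_getElem (by simp; omega)
  intro t _ ht
  simp only [List.getElem_ofFn, List.getElem_take, List.getElem_drop]
  exact hω _ _

section Counting

variable {A : Type*} [DecidableEq A] (d : List A)

theorem occCount_mono (ω : ℕ → A) : Monotone (occCount d ω) :=
  fun _ _ hmn => card_le_card (filter_subset_filter _ (range_subset_range.mpr hmn))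

theorem occCount_add (ω : ℕ → A) (a b : ℕ) :
    occCount d ω (a + b) = occCount d ω a + occCount d (fun k => ω (a + k)) b := by
  simp only [occCount, card_filter, sum_range_add, add_assoc]

theorem occCount_add_le (ω : ℕ → A) (a b : ℕ) : occCount d ω (a + b) ≤ occCount d ω a + b := by
  rw [occCount_add]
  exact Nat.add_le_add_left ((card_filter_le _ _).trans (card_range b).le) _

theorem occCount_sum (ω : ℕ → A) (ℓ : ℕ → ℕ) (N : ℕ) :
    occCount d ω (∑ i ∈ range N, ℓ i) =
      ∑ i ∈ range N, occCount d (fun k => ω (∑ t ∈ range i, ℓ t + k)) (ℓ i) := by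
  induction N with
  | zero => simp [occCount]
  | succ N ih => rw [sum_range_succ, occCount_add, ih, sum_range_succ]

-- `w.length + 1 - d.length` is the number of possible start positions of `d` in `w`
-- (truncated to `0` when `d` is longer than `w`).
theorem countFactor_eq_occCount {w : List A} {ω : ℕ → A}
    (hω : ∀ j (hj : j < w.length), ω j = w[j]) :
    countFactor d w = occCount d ω (w.length + 1 - d.length) := by
  unfold countFactor occCount
  congr 1
  ext j
  simp only [mem_filter, mem_range]
  constructor
  · rintro ⟨-, hjd, hocc⟩
    exact ⟨by omega, (ofFn_eq_take_drop hω hjd).trans hocc⟩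
  · rintro ⟨hj, hocc⟩
    have hjd : j + d.length ≤ w.length := by omega
    exact ⟨by omega, hjd, (ofFn_eq_take_drop hω hjd).symm.trans hocc⟩

theorem countFactor_le_occCount_add_one {w : List A} {ω : ℕ → A}
    (hω : ∀ j (hj : j < w.length), ω j = w[j]) :
    countFactor d w ≤ occCount d ω w.length + 1 := by
  rw [countFactor_eq_occCount d hω]
  exact (occCount_mono d ω (by omega)).trans (occCount_add_le d ω _ 1)

theorem occCount_le_countFactor_add_length {w : List A} {ω : ℕ → A}
    (hω : ∀ j (hj : j < w.length), ω j = w[j]) :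
    occCount d ω w.length ≤ countFactor d w + d.length := by
  rw [countFactor_eq_occCount d hω]
  exact (occCount_mono d ω (by omega)).trans (occCount_add_le d ω _ _)

end Counting

section Concat

variable {A : Type*} {v : ℕ → List A} {V : ℕ → A}

theorem length_flatten_map_range (v : ℕ → List A) (N : ℕ) :
    ((List.range N).map v).flatten.length = ∑ i ∈ range N, (v i).length := by
  induction N with
  | zero => simp
  | succ N ih => simp [List.range_succ, sum_range_succ, ih]

theorem IsConcat.apply_sum_add (hV : IsConcat v V) {i j : ℕ} (hj : j < (v i).length) :
    V (∑ t ∈ range i, (v t).length + j) = (v i)[j] := by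
  have h := hV (i + 1) (∑ t ∈ range i, (v t).length + j) (by rw [sum_range_succ]; omega)
  rw [List.range_succ, List.map_append, List.flatten_append,
    List.getElem?_append_right (by rw [length_flatten_map_range]; omega),
    length_flatten_map_range, Nat.add_sub_cancel_left] at h
  simpa [List.getElem?_eq_getElem hj] using h.symm

variable [DecidableEq A] (d : List A)

theorem IsConcat.sum_countFactor_le (hV : IsConcat v V) {N n : ℕ}
    (hn : ∑ i ∈ range N, (v i).length ≤ n) :
    ∑ i ∈ range N, countFactor d (v i) ≤ occCount d V n + N := by
  calc ∑ i ∈ range N, countFactor d (v i)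
      ≤ ∑ i ∈ range N,
          (occCount d (fun k => V (∑ t ∈ range i, (v t).length + k)) (v i).length + 1) :=
        sum_le_sum fun i _ => countFactor_le_occCount_add_one d fun _ => hV.apply_sum_add
    _ = occCount d V (∑ i ∈ range N, (v i).length) + N := by
        rw [sum_add_distrib, occCount_sum d V _ N]; simp
    _ ≤ occCount d V n + N := by gcongr; exact occCount_mono d V hn

theorem IsConcat.occCount_le_sum_countFactor (hV : IsConcat v V) {N n : ℕ}
    (hn : n ≤ ∑ i ∈ range (N + 1), (v i).length) :
    occCount d V n ≤ ∑ i ∈ range N, countFactor d (v i) + d.length * N + (v N).length := by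
  rw [sum_range_succ] at hn
  calc occCount d V n
      ≤ occCount d V (∑ i ∈ range N, (v i).length) + (v N).length :=
        (occCount_mono d V hn).trans (occCount_add_le d V _ _)
    _ ≤ ∑ i ∈ range N, (countFactor d (v i) + d.length) + (v N).length := by
        rw [occCount_sum d V _ N]
        gcongr with i
        exact occCount_le_countFactor_add_length d fun _ => hV.apply_sum_add
    _ = ∑ i ∈ range N, countFactor d (v i) + d.length * N + (v N).length := by
        rw [sum_add_distrib, sum_const, card_range, smul_eq_mul, mul_comm]

theorem IsConcat.abs_occCount_sub_sum_countFactor_le (hV : IsConcat v V) {N n : ℕ}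
    (hlo : ∑ i ∈ range N, (v i).length ≤ n) (hhi : n ≤ ∑ i ∈ range (N + 1), (v i).length) :
    |(occCount d V n : ℝ) - ∑ i ∈ range N, (countFactor d (v i) : ℝ)| ≤
      (d.length + 1) * N + (v N).length := by
  have hle : (∑ i ∈ range N, countFactor d (v i) : ℝ) ≤ occCount d V n + N := by
    exact_mod_cast hV.sum_countFactor_le d hlo
  have hge : (occCount d V n : ℝ) ≤
      ∑ i ∈ range N, (countFactor d (v i) : ℝ) + d.length * N + (v N).length := by
    exact_mod_cast hV.occCount_le_sum_countFactor d hhi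
  rw [abs_le]
  have : (0 : ℝ) ≤ d.length * N := by positivity
  constructor <;> linarith [Nat.cast_nonneg (α := ℝ) (v N).length]

end Concat

section BlockIndex

variable {S : ℕ → ℕ} (hS : Monotone S) {Nf : ℕ → ℕ} (hNf : ∀ n, S (Nf n) ≤ n ∧ n < S (Nf n + 1))
include hS hNf

theorem tendsto_blockIndex_atTop : Tendsto Nf atTop atTop := by
  refine tendsto_atTop_atTop.mpr fun M => ⟨S M, fun n hn => ?_⟩
  by_contra! h
  have := hS (show Nf n + 1 ≤ M by omega)
  have := (hNf n).2
  omega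

theorem eventually_pos_at_blockIndex : ∀ᶠ n in atTop, 0 < S (Nf n) := by
  filter_upwards [(tendsto_blockIndex_atTop hS hNf).eventually_ge_atTop (Nf 0 + 1)] with n hn
  exact lt_of_lt_of_le (hNf 0).2 (hS hn)

theorem tendsto_div_at_blockIndex {f : ℕ → ℝ} (hf : ∀ N, 0 ≤ f N)
    (hfS : Tendsto (fun N => f N / S N) atTop (nhds 0)) :
    Tendsto (fun n : ℕ => f (Nf n) / n) atTop (nhds 0) := by
  refine squeeze_zero' (Eventually.of_forall fun n => div_nonneg (hf _) n.cast_nonneg) ?_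
    (hfS.comp (tendsto_blockIndex_atTop hS hNf))
  filter_upwards [eventually_pos_at_blockIndex hS hNf] with n hn
  exact div_le_div_of_nonneg_left (hf _) (by exact_mod_cast hn) (by exact_mod_cast (hNf n).1)

end BlockIndex

theorem inner_block_counts_normal_general {A : Type*} [DecidableEq A]
    [MeasurableSpace A] (μ : Measure (ℕ → A))
    (v : ℕ → List A)
    (hratio1 : Tendsto
      (fun N : ℕ => ((v N).length : ℝ) / ∑ i ∈ Finset.range N, ((v i).length : ℝ))
      atTop (nhds 0))
    (hratio2 : Tendsto
      (fun N : ℕ => (N : ℝ) / ∑ i ∈ Finset.range N, ((v i).length : ℝ))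
      atTop (nhds 0))
    (V : ℕ → A) (hV : IsConcat v V) (hVnorm : IsMuNormal μ V)
    (Nf : ℕ → ℕ)
    (hNf : ∀ n : ℕ, (∑ i ∈ Finset.range (Nf n), (v i).length) ≤ n ∧
      n < ∑ i ∈ Finset.range (Nf n + 1), (v i).length) :
    ∀ d : List A,
      Tendsto (fun n => (∑ i ∈ Finset.range (Nf n), (countFactor d (v i) : ℝ)) / n)
        atTop (nhds (μ (cylinder d)).toReal) := by
  intro d
  have hS : Monotone fun N => ∑ i ∈ range N, (v i).length :=
    (sum_mono_set _).comp range_mono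
  simp only [← Nat.cast_sum] at hratio1 hratio2
  have hlast := tendsto_div_at_blockIndex hS hNf (fun _ => Nat.cast_nonneg _) hratio1
  have hcount := tendsto_div_at_blockIndex hS hNf (fun _ => Nat.cast_nonneg _) hratio2
  have herr : Tendsto (fun n : ℕ => ((d.length + 1) * Nf n + (v (Nf n)).length : ℝ) / n)
      atTop (nhds 0) := by
    simpa [add_div, mul_div_assoc] using (hcount.const_mul ((d.length : ℝ) + 1)).add hlast
  refine (hVnorm d).congr_dist (squeeze_zero (fun _ => dist_nonneg) (fun n => ?_) herr)
  rw [Real.dist_eq, ← sub_div, abs_div, Nat.abs_cast]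
  exact div_le_div_of_nonneg_right
    (hV.abs_occCount_sub_sum_countFactor_le d (hNf n).1 (hNf n).2.le) n.cast_nonneg

/-- If the concatenation v = v_1 v_2 ... is μ-normal and the block lengths satisfy
the stated growth conditions, then the in-block occurrence counts alone already
have the right asymptotic frequency. -/
theorem inner_block_counts_normal {A : Type*} [Fintype A] [DecidableEq A]
    [MeasurableSpace A] (μ : Measure (ℕ → A)) [IsProbabilityMeasure μ]
    (hshift : MeasurePreserving (fun ω (n : ℕ) => ω (n + 1)) μ μ)
    (v : ℕ → List A)
    (hlen_top : Tendsto (fun i => (v i).length) atTop atTop)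
    (hratio1 : Tendsto
      (fun N : ℕ => ((v N).length : ℝ) / ∑ i ∈ Finset.range N, ((v i).length : ℝ))
      atTop (nhds 0))
    (hratio2 : Tendsto
      (fun N : ℕ => (N : ℝ) / ∑ i ∈ Finset.range N, ((v i).length : ℝ))
      atTop (nhds 0))
    (V : ℕ → A) (hV : IsConcat v V) (hVnorm : IsMuNormal μ V)
    (Nf : ℕ → ℕ)
    (hNf : ∀ n : ℕ, (∑ i ∈ Finset.range (Nf n), (v i).length) ≤ n ∧
      n < ∑ i ∈ Finset.range (Nf n + 1), (v i).length) :
    ∀ d : List A,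
      Tendsto (fun n => (∑ i ∈ Finset.range (Nf n), (countFactor d (v i) : ℝ)) / n)
        atTop (nhds (μ (cylinder d)).toReal) :=
  inner_block_counts_normal_general μ v hratio1 hratio2 V hV hVnorm Nf hNf
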